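/- arXiv:1808.04629 — 2 statements merged into one kernel-verified Lean document; each statement's English description precedes it below -/
import Mathlib

section
/- For every x in Ledrappier's space X, every integer n ≥ 1, and every (s,t) ∈ ℤ×ℤ, one has x(s,t) = x(s+2^n, t) + x(s, t+2^n) in ZMod 2. -/
/-- Ledrappier's space: the set of configurations `x : ℤ × ℤ → ZMod 2` satisfying
`x (s, t) = x (s+1, t) + x (s, t+1)` for all `(s, t) ∈ ℤ × ℤ`. -/
def LedrappierSet : Set ((ℤ × ℤ) → ZMod 2) :=
  {x | ∀ s t : ℤ, x (s, t) = x (s + 1, t) + x (s, t + 1)}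

/-!
Expanding both terms of the rule with step `m` by the rule itself produces the middle
value `x (s + m, t + m)` twice, which cancels in characteristic `2`; so step `m` implies
step `2 m`, and induction on `n` gives step `2 ^ n`. (This is the identity
`(a + b) ^ 2 = a ^ 2 + b ^ 2` for the shifts `a, b` acting on configurations.)
-/

def LedrappierRule {R : Type*} [Add R] (x : ℤ × ℤ → R) (m : ℤ) : Prop :=
  ∀ s t : ℤ, x (s, t) = x (s + m, t) + x (s, t + m)

namespace LedrappierRule

variable {R : Type*} {x : ℤ × ℤ → R}

theorem double [Ring R] [CharP R 2] {m : ℤ} (h : LedrappierRule x m) :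
    LedrappierRule x (2 * m) := by
  intro s t
  have hright := h (s + m) t
  have hup := h s (t + m)
  rw [add_assoc, ← two_mul] at hright hup
  calc x (s, t)
      = x (s + m, t) + x (s, t + m) := h s t
    _ = x (s + 2 * m, t) + x (s, t + 2 * m) + (x (s + m, t + m) + x (s + m, t + m)) := by
        rw [hright, hup]; abel
    _ = x (s + 2 * m, t) + x (s, t + 2 * m) := by rw [CharTwo.add_self_eq_zero, add_zero]

theorem two_pow [Ring R] [CharP R 2] (h : LedrappierRule x 1) (n : ℕ) :
    LedrappierRule x (2 ^ n) := by
  induction n with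
  | zero => simpa using h
  | succ k ih => simpa [pow_succ'] using ih.double

end LedrappierRule

theorem ledrappier_frobenius_relation_general (x : (ℤ × ℤ) → ZMod 2) (hx : x ∈ LedrappierSet)
    (n : ℕ) (s t : ℤ) :
    x (s, t) = x (s + 2 ^ n, t) + x (s, t + 2 ^ n) :=
  LedrappierRule.two_pow hx n s t

/-- For every `x` in Ledrappier's space, every `n ≥ 1` and every `(s, t) ∈ ℤ × ℤ`,
`x (s, t) = x (s + 2^n, t) + x (s, t + 2^n)` in `ZMod 2`. -/
theorem ledrappier_frobenius_relation (x : (ℤ × ℤ) → ZMod 2) (hx : x ∈ LedrappierSet)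
    (n : ℕ) (hn : 1 ≤ n) (s t : ℤ) :
    x (s, t) = x (s + 2 ^ n, t) + x (s, t + 2 ^ n) :=
  ledrappier_frobenius_relation_general x hx n s t
end

section
/- Let A = {x ∈ X : x(0,0) = 0}. For every integer n ≥ 1, μ(A ∩ σ_{(2^n,0)}^{-1}(A) ∩ σ_{(0,2^n)}^{-1}(A)) = 1/4, whereas μ(A)^3 = 1/8. Consequently the shift action of ℤ² on (X, μ) is not mixing of order 2 (not mixing on 3 sets). -/
/-!
Iterating the defining relation and using that squaring is additive in characteristic 2 gives
`x (s, t) = x (s + 2ⁿ, t) + x (s, t + 2ⁿ)`, so the triple intersection is the set where the two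
coordinates `x (0,0)` and `x (2ⁿ,0)` vanish. These two coordinates form a surjective homomorphism
onto `(ZMod 2)²` (already on the 3-periodic points of `X`), so by translation invariance each fibre
has Haar measure `1/4`, for every `n`. Mixing of order 2 would force the limit `1/8` instead.
-/

open MeasureTheory

/-- Ledrappier's space `X` as a subgroup of the compact abelian group `(ℤ × ℤ) → ZMod 2`
(with pointwise addition and the product topology): the configurations satisfying
`x (s, t) = x (s+1, t) + x (s, t+1)` for all `(s, t)`. -/
def LedrappierGroup : AddSubgroup ((ℤ × ℤ) → ZMod 2) where
  carrier := {x | ∀ s t : ℤ, x (s, t) = x (s + 1, t) + x (s, t + 1)}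
  zero_mem' := by intro s t; simp
  add_mem' := by
    intro a b ha hb s t
    simp only [Pi.add_apply, ha s t, hb s t]
    abel
  neg_mem' := by
    intro a ha s t
    simp only [Pi.neg_apply, ha s t]
    abel

/-- The shift by `g` preserves Ledrappier's space. -/
theorem shift_mem (g : ℤ × ℤ) {x : (ℤ × ℤ) → ZMod 2} (hx : x ∈ LedrappierGroup) :
    (fun v => x (v + g)) ∈ LedrappierGroup := by
  intro s t
  have h := hx (s + g.1) (t + g.2)
  rcases g with ⟨a, b⟩
  simp only [Prod.mk_add_mk]
  convert h using 3 <;> ring_nf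

/-- The shift `σ_g` on Ledrappier's space: `(σ_g x) v = x (v + g)`. -/
def ledShift (g : ℤ × ℤ) (x : LedrappierGroup) : LedrappierGroup :=
  ⟨fun v => x.val (v + g), shift_mem g x.2⟩

/-- A measure-preserving action `T` of a normed abelian group `G` (e.g. `ℤ^d`) on a
probability space `(Y, ν)` is mixing of order `k` (mixing on `k+1` sets) if for all
measurable sets `A 0, …, A k` and every `ε > 0` there is `N` such that
`|ν(A 0 ∩ T g₁ ⁻¹' A 1 ∩ ⋯ ∩ T g_k ⁻¹' A k) − ∏ ν (A j)| < ε` whenever `‖g i‖ ≥ N` for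
all `i` and `‖g i − g j‖ ≥ N` for all `i ≠ j`. -/
def MixingOfOrder {Y : Type*} [MeasurableSpace Y] (ν : Measure Y)
    {G : Type*} [NormedAddCommGroup G] (T : G → Y → Y) (k : ℕ) : Prop :=
  ∀ A : Fin (k + 1) → Set Y, (∀ i, MeasurableSet (A i)) →
    ∀ ε : ℝ, 0 < ε → ∃ N : ℝ,
      ∀ g : Fin k → G, (∀ i, N ≤ ‖g i‖) → (∀ i j, i ≠ j → N ≤ ‖g i - g j‖) →
        |(ν (A 0 ∩ ⋂ i : Fin k, T (g i) ⁻¹' A i.succ)).toReal -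
            ∏ j, (ν (A j)).toReal| < ε

/-- The cylinder set `A = {x ∈ X : x (0,0) = 0}`. -/
def cylA : Set LedrappierGroup := {x | (x : (ℤ × ℤ) → ZMod 2) (0, 0) = 0}

open Filter Topology

section FiniteQuotient

variable {G V : Type*} [AddGroup G] [MeasurableSpace G] [MeasurableAdd G] [AddGroup V]

theorem measure_preimage_eq_of_surjective (μ : Measure G) [μ.IsAddLeftInvariant] (φ : G →+ V)
    (hφ : Function.Surjective φ) (w w' : V) : μ (φ ⁻¹' {w'}) = μ (φ ⁻¹' {w}) := by
  obtain ⟨c, hc⟩ := hφ (w - w')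
  have htranslate : (c + ·) ⁻¹' (φ ⁻¹' {w}) = φ ⁻¹' {w'} := by
    ext x
    simp only [Set.mem_preimage, Set.mem_singleton_iff, map_add, ← eq_neg_add_iff_add_eq, hc,
      neg_sub, sub_add_cancel]
  rw [← htranslate, measure_preimage_add]

theorem measure_preimage_singleton_of_surjective [Fintype V] [MeasurableSpace V]
    [MeasurableSingletonClass V] (μ : Measure G) [μ.IsAddLeftInvariant] [IsProbabilityMeasure μ]
    (φ : G →+ V) (hφm : Measurable φ) (hφ : Function.Surjective φ) (w : V) :
    μ (φ ⁻¹' {w}) = (Fintype.card V : ENNReal)⁻¹ := by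
  have hsum : ∑ w' : V, μ (φ ⁻¹' {w'}) = 1 := by
    rw [sum_measure_preimage_singleton _ fun w' _ => hφm (measurableSet_singleton w')]
    simp
  simp only [measure_preimage_eq_of_surjective μ φ hφ w, Finset.sum_const, Finset.card_univ,
    nsmul_eq_mul] at hsum
  exact ENNReal.eq_inv_of_mul_eq_one_left (by rwa [mul_comm])

end FiniteQuotient

theorem MixingOfOrder.tendsto_measure_inter_preimage_inter_preimage {Y G ι : Type*}
    [MeasurableSpace Y] {ν : Measure Y} [NormedAddCommGroup G] {T : G → Y → Y}
    (h : MixingOfOrder ν T 2) {A B C : Set Y} (hA : MeasurableSet A) (hB : MeasurableSet B)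
    (hC : MeasurableSet C) {l : Filter ι} {u v : ι → G} (hu : Tendsto (‖u ·‖) l atTop)
    (hv : Tendsto (‖v ·‖) l atTop) (huv : Tendsto (fun i => ‖u i - v i‖) l atTop) :
    Tendsto (fun i => (ν (A ∩ T (u i) ⁻¹' B ∩ T (v i) ⁻¹' C)).toReal) l
      (𝓝 ((ν A).toReal * (ν B).toReal * (ν C).toReal)) := by
  rw [Metric.tendsto_nhds]
  intro ε hε
  obtain ⟨N, hN⟩ := h ![A, B, C] (by simp [Fin.forall_fin_succ, hA, hB, hC]) ε hε
  filter_upwards [hu.eventually_ge_atTop N, hv.eventually_ge_atTop N,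
    huv.eventually_ge_atTop N] with i hui hvi huvi
  have hmix := hN ![u i, v i] (by simp [Fin.forall_fin_two, hui, hvi])
    (by simp [Fin.forall_fin_two, huvi, norm_sub_rev (v i)])
  have hinter : A ∩ ⋂ j : Fin 2, T (![u i, v i] j) ⁻¹' ![B, C] j
      = A ∩ T (u i) ⁻¹' B ∩ T (v i) ⁻¹' C := by
    ext; simp [Fin.forall_fin_two, and_assoc]
  simpa [Real.dist_eq, hinter, Fin.prod_univ_three, mul_assoc] using hmix

namespace LedrappierGroup

theorem apply_eq_add_two_pow {x : (ℤ × ℤ) → ZMod 2} (hx : x ∈ LedrappierGroup) (n : ℕ)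
    (s t : ℤ) : x (s, t) = x (s + 2 ^ n, t) + x (s, t + 2 ^ n) := by
  induction n generalizing s t with
  | zero => simpa using hx s t
  | succ n ih =>
    have hcancel : ∀ a b c : ZMod 2, (a + b) + (b + c) = a + c := by decide
    rw [ih s t, ih (s + 2 ^ n) t, ih s (t + 2 ^ n), hcancel, pow_succ, mul_two, ← add_assoc,
      ← add_assoc]

def eval (v : ℤ × ℤ) : LedrappierGroup →+ ZMod 2 :=
  (Pi.evalAddMonoidHom (fun _ => ZMod 2) v).comp LedrappierGroup.subtype

theorem measurable_eval (v : ℤ × ℤ) : Measurable (eval v) :=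
  (measurable_pi_apply v).comp measurable_subtype_coe

def periodicPattern (k : ZMod 3) : ZMod 2 := if k = 0 then 0 else 1

/-- `x (s, t) = Tr (ω ^ (s + 2 t + j))` with `ω + ω² = 1` in `𝔽₄`; the trace depends only on
`s - t + j` mod 3. -/
def periodicPoint (j : ZMod 3) : LedrappierGroup :=
  ⟨fun v => periodicPattern ((v.1 - v.2 : ℤ) + j), fun s t => by
    have hpattern : ∀ k : ZMod 3,
        periodicPattern k = periodicPattern (k + 1) + periodicPattern (k - 1) := by decide
    dsimp only
    push_cast
    convert hpattern ((s - t : ZMod 3) + j) using 3 <;> ring⟩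

theorem eval_prod_eval_surjective {m : ℤ} (hm : (m : ZMod 3) ≠ 0) :
    Function.Surjective ((eval (0, 0)).prod (eval (m, 0))) := by
  have hcover : ∀ a : ZMod 3, a ≠ 0 → ∀ w : ZMod 2 × ZMod 2,
      w = 0 ∨ ∃ j, (periodicPattern j, periodicPattern (a + j)) = w := by decide
  intro w
  rcases hcover _ hm w with rfl | ⟨j, rfl⟩
  · exact ⟨0, map_zero _⟩
  · exact ⟨periodicPoint j, by simp [eval, periodicPoint]⟩

theorem cylA_eq_preimage_eval : cylA = eval (0, 0) ⁻¹' {0} := rfl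

theorem measurableSet_cylA : MeasurableSet cylA :=
  measurable_eval _ (measurableSet_singleton 0)

theorem cylA_inter_preimage_shift_two_pow (n : ℕ) :
    cylA ∩ ledShift ((2 ^ n : ℤ), (0 : ℤ)) ⁻¹' cylA ∩ ledShift ((0 : ℤ), (2 ^ n : ℤ)) ⁻¹' cylA
      = (eval (0, 0)).prod (eval (2 ^ n, 0)) ⁻¹' {0} := by
  ext x
  have hdouble := apply_eq_add_two_pow x.2 n 0 0
  simp only [zero_add] at hdouble
  simp only [cylA, ledShift, eval, Set.mem_inter_iff, Set.mem_preimage, Set.mem_ofPred_eq,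
    Set.mem_singleton_iff, Prod.ext_iff, AddMonoidHom.prod_apply, AddMonoidHom.comp_apply,
    Pi.evalAddMonoidHom_apply, AddSubgroup.coe_subtype, Prod.mk_add_mk, add_zero, zero_add,
    Prod.fst_zero, Prod.snd_zero]
  constructor
  · rintro ⟨⟨h₀, h₁⟩, -⟩
    exact ⟨h₀, h₁⟩
  · rintro ⟨h₀, h₁⟩
    refine ⟨⟨h₀, h₁⟩, ?_⟩
    rwa [h₀, h₁, zero_add, eq_comm] at hdouble

variable (μ : Measure LedrappierGroup) [μ.IsAddLeftInvariant] [IsProbabilityMeasure μ]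

theorem measure_cylA : μ cylA = 2⁻¹ := by
  have hsurj : Function.Surjective (eval (0, 0)) :=
    Prod.fst_surjective.comp (eval_prod_eval_surjective (m := 1) (by decide))
  rw [cylA_eq_preimage_eval,
    measure_preimage_singleton_of_surjective μ _ (measurable_eval _) hsurj, ZMod.card]
  norm_num

theorem measure_cylA_inter_preimage_shift_two_pow (n : ℕ) :
    μ (cylA ∩ ledShift ((2 ^ n : ℤ), (0 : ℤ)) ⁻¹' cylA
      ∩ ledShift ((0 : ℤ), (2 ^ n : ℤ)) ⁻¹' cylA) = 4⁻¹ := by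
  have hsurj := eval_prod_eval_surjective (m := 2 ^ n) <| by
    push_cast
    exact pow_ne_zero _ (by decide)
  rw [cylA_inter_preimage_shift_two_pow, measure_preimage_singleton_of_surjective μ _
    ((measurable_eval _).prodMk (measurable_eval _)) hsurj]
  simp only [Fintype.card_prod, ZMod.card]
  norm_num

end LedrappierGroup

open LedrappierGroup in
/-- For `A = {x ∈ X : x (0,0) = 0}` and every `n ≥ 1`,
`μ(A ∩ σ_{(2^n,0)}⁻¹ A ∩ σ_{(0,2^n)}⁻¹ A) = 1/4`, whereas `μ(A)³ = 1/8`; consequently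
the shift action of `ℤ²` on `(X, μ)` is not mixing of order 2 (not mixing on 3 sets). -/
theorem ledrappier_not_mixing_of_order_two (μ : Measure LedrappierGroup)
    [μ.IsAddHaarMeasure] [IsProbabilityMeasure μ] :
    (∀ n : ℕ, 1 ≤ n →
        μ (cylA ∩ ledShift ((2 ^ n : ℤ), (0 : ℤ)) ⁻¹' cylA
            ∩ ledShift ((0 : ℤ), (2 ^ n : ℤ)) ⁻¹' cylA) = 1 / 4) ∧
    μ cylA ^ 3 = 1 / 8 ∧
    ¬ MixingOfOrder μ ledShift 2 := by
  refine ⟨fun n _ => by rw [measure_cylA_inter_preimage_shift_two_pow, one_div], ?_, ?_⟩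
  · rw [measure_cylA, ← ENNReal.inv_pow, one_div]
    norm_num
  · intro hmix
    have hnorm : Tendsto (fun n : ℕ => (2 : ℝ) ^ n) atTop atTop :=
      tendsto_pow_atTop_atTop_of_one_lt one_lt_two
    have hlim := hmix.tendsto_measure_inter_preimage_inter_preimage measurableSet_cylA
      measurableSet_cylA measurableSet_cylA (u := fun n => ((2 ^ n : ℤ), (0 : ℤ)))
      (v := fun n => ((0 : ℤ), (2 ^ n : ℤ))) (by simpa [Int.norm_eq_abs] using hnorm)
      (by simpa [Int.norm_eq_abs] using hnorm) (by simpa [Int.norm_eq_abs] using hnorm)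
    simp only [measure_cylA_inter_preimage_shift_two_pow, measure_cylA,
      tendsto_const_nhds_iff] at hlim
    norm_num at hlim
end
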